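/- For every p > 1 one has the energy identity ∫_{-1}^{1} (u_p'(t))² dt = ∫_{-1}^{1} u_p^{p+1}(t) dt, and moreover there exist constants c > 0, C > 0 and p₀ > 1 such that c ≤ ∫_{-1}^{1} u_p^{p+1}(t) dt ≤ C for all p ≥ p₀. -/

import Mathlib

/-!
Multiplying `-u'' = u^p` by `u` and integrating by parts gives the energy identity; multiplying
by `u'` gives the conservation law `(p+1) u'² + 2 u^(p+1) = 2 M^(p+1)` with `M = u(0)`.
Integrating the conservation law and using the energy identity yields `(p+3) E = 4 M^(p+1)`
for the energy `E`, so both bounds amount to `M^(p+1) ≍ p`.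

Lower bound: by concavity `M ≤ |u'(1)|`, and the conservation law at `t = 1` gives
`(p+1) M² ≤ 2 M^(p+1)`; hence `M > 1` and `M^(p+1) ≥ (p+1)/2`.
Upper bound: with `K = u(1/2)`, concavity on `[0, 1/2]` and on `[1/2, 1]` gives `K^p ≤ 4K`, so
`K ≤ 2` once `p ≥ 3`. At a mean value point `c ∈ (1/2, 1)` we have `u'(c) = -2K` and `u(c) ≤ K`,
and the conservation law there gives `M^(p+1) ≤ K^(p+1) + 2(p+1) K² = O(p)`.
-/

open Real Set Filter Topology

noncomputable section

/-- `u` is the (unique) positive solution of the one-dimensional Lane–Emden problem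
`-u'' = u^p` on `(-1,1)` with `u(-1) = u(1) = 0`; it is even, positive on `(-1,1)`,
decreasing on `[0,1]`, and its sup norm is attained at `0`. -/
def IsLaneEmden (p : ℝ) (u : ℝ → ℝ) : Prop :=
  ContDiff ℝ 2 u ∧
  (∀ t ∈ Ioo (-1 : ℝ) 1, deriv (deriv u) t = -(u t ^ p)) ∧
  u (-1) = 0 ∧ u 1 = 0 ∧
  (∀ t ∈ Ioo (-1 : ℝ) 1, 0 < u t) ∧
  (∀ t : ℝ, u (-t) = u t) ∧
  (∀ ⦃s t : ℝ⦄, s ∈ Icc (0 : ℝ) 1 → t ∈ Icc (0 : ℝ) 1 → s ≤ t → u t ≤ u s) ∧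
  (∀ t ∈ Icc (-1 : ℝ) 1, u t ≤ u 0)


theorem constant_of_hasDerivAt_zero {f : ℝ → ℝ} {a b : ℝ} (hf : ContinuousOn f (Icc a b))
    (hf' : ∀ x ∈ Ioo a b, HasDerivAt f 0 x) : ∀ x ∈ Icc a b, f x = f a := by
  rintro x ⟨hax, hxb⟩
  rcases hax.eq_or_lt with rfl | hax
  · rfl
  obtain ⟨c, -, hslope⟩ := exists_hasDerivAt_eq_slope f (fun _ => 0) hax
    (hf.mono (Icc_subset_Icc_right hxb)) fun y hy => hf' y ⟨hy.1, hy.2.trans_le hxb⟩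
  rw [eq_comm, div_eq_zero_iff, sub_eq_zero, sub_eq_zero] at hslope
  exact hslope.resolve_right hax.ne'

theorem Real.rpow_add_one_eq_rpow_sub_one_mul_sq {x : ℝ} (hx : 0 < x) (q : ℝ) :
    x ^ (q + 1) = x ^ (q - 1) * x ^ 2 := by
  rw [← rpow_two, ← rpow_add hx]
  ring_nf

namespace IsLaneEmden

variable {p : ℝ} {v : ℝ → ℝ} (hL : IsLaneEmden p v)
include hL

theorem differentiable : Differentiable ℝ v := hL.1.differentiable two_ne_zero

theorem differentiable_deriv : Differentiable ℝ (deriv v) := hL.1.differentiable_deriv_two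

theorem continuous_deriv_deriv : Continuous (deriv (deriv v)) :=
  (hL.1.deriv' (n := 1)).continuous_deriv le_rfl

theorem deriv_deriv_eq {t : ℝ} (ht : t ∈ Ioo (-1 : ℝ) 1) : deriv (deriv v) t = -(v t ^ p) :=
  hL.2.1 t ht

theorem apply_neg_one : v (-1) = 0 := hL.2.2.1

theorem apply_one : v 1 = 0 := hL.2.2.2.1

theorem pos {t : ℝ} (ht : t ∈ Ioo (-1 : ℝ) 1) : 0 < v t := hL.2.2.2.2.1 t ht

theorem apply_neg (t : ℝ) : v (-t) = v t := hL.2.2.2.2.2.1 t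

theorem antitoneOn : AntitoneOn v (Icc 0 1) := fun _ hs _ ht => hL.2.2.2.2.2.2.1 hs ht

theorem nonneg {t : ℝ} (ht : t ∈ Icc (-1 : ℝ) 1) : 0 ≤ v t := by
  rcases ht.1.eq_or_lt with rfl | h₁
  · exact hL.apply_neg_one.ge
  rcases ht.2.eq_or_lt with rfl | h₂
  · exact hL.apply_one.ge
  exact (hL.pos ⟨h₁, h₂⟩).le

theorem deriv_apply_neg (t : ℝ) : deriv v (-t) = -deriv v t := by
  have h := ((hL.differentiable (-t)).hasDerivAt.comp t (hasDerivAt_neg t)).deriv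
  rw [show (v ∘ fun s => -s) = v from funext hL.apply_neg] at h
  linarith

theorem deriv_zero : deriv v 0 = 0 := by
  have h := hL.deriv_apply_neg 0
  rw [neg_zero] at h
  linarith

theorem deriv_antitoneOn : AntitoneOn (deriv v) (Icc (-1) 1) := by
  refine antitoneOn_of_deriv_nonpos (convex_Icc _ _) hL.differentiable_deriv.continuous.continuousOn
    hL.differentiable_deriv.differentiableOn fun t ht => ?_
  rw [interior_Icc] at ht
  rw [hL.deriv_deriv_eq ht, neg_nonpos]
  exact rpow_nonneg (hL.pos ht).le p

theorem integral_deriv_sq_eq :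
    ∫ t in (-1 : ℝ)..1, deriv v t ^ 2 = ∫ t in (-1 : ℝ)..1, v t ^ (p + 1) := by
  have hparts := intervalIntegral.integral_mul_deriv_eq_deriv_mul (a := -1) (b := 1)
    (fun t _ => (hL.differentiable t).hasDerivAt) (fun t _ => (hL.differentiable_deriv t).hasDerivAt)
    (hL.differentiable_deriv.continuous.intervalIntegrable _ _)
    (hL.continuous_deriv_deriv.intervalIntegrable _ _)
  have hequation : ∫ t in (-1 : ℝ)..1, v t * deriv (deriv v) t
      = ∫ t in (-1 : ℝ)..1, -(v t ^ (p + 1)) := by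
    refine intervalIntegral.integral_congr_Ioo_of_le (by norm_num) fun t ht => ?_
    rw [hL.deriv_deriv_eq ht, rpow_add_one (hL.pos ht).ne']
    ring
  rw [hequation, intervalIntegral.integral_neg, hL.apply_one, hL.apply_neg_one] at hparts
  simp only [sq]
  linarith

theorem add_one_mul_deriv_sq_eq (hp : 0 ≤ p + 1) {t : ℝ} (ht : t ∈ Icc (-1 : ℝ) 1) :
    (p + 1) * deriv v t ^ 2 = 2 * (v 0 ^ (p + 1) - v t ^ (p + 1)) := by
  set H : ℝ → ℝ := fun s => (p + 1) * deriv v s ^ 2 + 2 * v s ^ (p + 1) with hH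
  have hH' : ∀ s ∈ Ioo (-1 : ℝ) 1, HasDerivAt H 0 s := by
    intro s hs
    have hderiv := (((hL.differentiable_deriv s).hasDerivAt.pow 2).const_mul (p + 1)).add
      (((hL.differentiable s).hasDerivAt.rpow_const (p := p + 1)
        (Or.inl (hL.pos hs).ne')).const_mul 2)
    refine hderiv.congr_deriv ?_
    rw [hL.deriv_deriv_eq hs, add_sub_cancel_right]
    ring
  have hHcont : Continuous H :=
    (continuous_const.mul (hL.differentiable_deriv.continuous.pow 2)).add
      (continuous_const.mul (hL.differentiable.continuous.rpow_const fun _ => Or.inr hp))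
  have hconst := constant_of_hasDerivAt_zero hHcont.continuousOn hH'
  have hHt : H t = H 0 := (hconst t ht).trans (hconst 0 ⟨by norm_num, by norm_num⟩).symm
  simp only [hH, hL.deriv_zero] at hHt
  linarith

theorem add_three_mul_integral_rpow_eq (hp : 0 ≤ p + 1) :
    (p + 3) * ∫ t in (-1 : ℝ)..1, v t ^ (p + 1) = 4 * v 0 ^ (p + 1) := by
  have hcont : Continuous fun t => v t ^ (p + 1) :=
    hL.differentiable.continuous.rpow_const fun _ => Or.inr hp
  have henergy : (p + 1) * ∫ t in (-1 : ℝ)..1, deriv v t ^ 2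
      = ∫ t in (-1 : ℝ)..1, 2 * (v 0 ^ (p + 1) - v t ^ (p + 1)) := by
    rw [← intervalIntegral.integral_const_mul]
    refine intervalIntegral.integral_congr fun t ht => hL.add_one_mul_deriv_sq_eq hp ?_
    rwa [uIcc_of_le (by norm_num)] at ht
  rw [intervalIntegral.integral_const_mul, intervalIntegral.integral_sub intervalIntegrable_const
    (hcont.intervalIntegrable _ _), intervalIntegral.integral_const, hL.integral_deriv_sq_eq,
    smul_eq_mul] at henergy
  linarith

theorem add_one_mul_sq_le (hp : 0 < p + 1) : (p + 1) * v 0 ^ 2 ≤ 2 * v 0 ^ (p + 1) := by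
  obtain ⟨c, hc, hslope⟩ := exists_deriv_eq_slope v zero_lt_one
    hL.differentiable.continuous.continuousOn hL.differentiable.differentiableOn
  have hderiv_c : deriv v c = -v 0 := by rw [hslope, hL.apply_one]; ring
  have hderiv_one : deriv v 1 ≤ -v 0 :=
    hderiv_c ▸ hL.deriv_antitoneOn ⟨by linarith [hc.1], hc.2.le⟩ ⟨by norm_num, le_rfl⟩ hc.2.le
  have henergy := hL.add_one_mul_deriv_sq_eq hp.le (t := 1) ⟨by norm_num, le_rfl⟩
  rw [hL.apply_one, zero_rpow hp.ne', sub_zero] at henergy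
  have hsq : v 0 ^ 2 ≤ deriv v 1 ^ 2 := by
    rw [← neg_sq (deriv v 1)]
    exact pow_le_pow_left₀ (hL.nonneg ⟨by norm_num, by norm_num⟩) (by linarith) 2
  exact henergy ▸ mul_le_mul_of_nonneg_left hsq hp.le

theorem one_lt_apply_zero (hp : 1 < p) : 1 < v 0 := by
  have hM : 0 < v 0 := hL.pos ⟨by norm_num, by norm_num⟩
  by_contra! hM_le
  have hrpow : v 0 ^ (p - 1) ≤ 1 := rpow_le_one hM.le hM_le (by linarith)
  have := hL.add_one_mul_sq_le (by linarith)
  rw [rpow_add_one_eq_rpow_sub_one_mul_sq hM] at this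
  nlinarith [pow_pos hM 2]

theorem add_three_le_four_mul_rpow (hp : 1 < p) : p + 3 ≤ 4 * v 0 ^ (p + 1) := by
  have hM := hL.one_lt_apply_zero hp
  nlinarith [hL.add_one_mul_sq_le (by linarith), one_lt_pow₀ hM two_ne_zero]

theorem deriv_half_le (hp : 0 ≤ p) : deriv v (1 / 2) ≤ -(v (1 / 2) ^ p / 2) := by
  obtain ⟨c, hc, hslope⟩ := exists_deriv_eq_slope (deriv v) one_half_pos
    hL.differentiable_deriv.continuous.continuousOn hL.differentiable_deriv.differentiableOn
  have hc' : c ∈ Ioo (-1 : ℝ) 1 := ⟨by linarith [hc.1], by linarith [hc.2]⟩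
  have hrpow : v (1 / 2) ^ p ≤ v c ^ p :=
    rpow_le_rpow (hL.nonneg ⟨by norm_num, by norm_num⟩)
      (hL.antitoneOn ⟨hc.1.le, by linarith [hc.2]⟩ ⟨by norm_num, by norm_num⟩ hc.2.le) hp
  rw [hL.deriv_deriv_eq hc', hL.deriv_zero, sub_zero, sub_zero] at hslope
  linarith

theorem exists_deriv_eq_neg_two_mul : ∃ c ∈ Ioo (1 / 2 : ℝ) 1, deriv v c = -2 * v (1 / 2) := by
  obtain ⟨c, hc, hslope⟩ := exists_deriv_eq_slope v one_half_lt_one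
    hL.differentiable.continuous.continuousOn hL.differentiable.differentiableOn
  exact ⟨c, hc, by rw [hslope, hL.apply_one]; ring⟩

theorem rpow_sub_one_apply_half_le_four (hp : 0 ≤ p) : v (1 / 2) ^ (p - 1) ≤ 4 := by
  have hK : 0 < v (1 / 2) := hL.pos ⟨by norm_num, by norm_num⟩
  obtain ⟨c, hc, hderiv_c⟩ := hL.exists_deriv_eq_neg_two_mul
  have := hL.deriv_antitoneOn ⟨by norm_num, by norm_num⟩ ⟨by linarith [hc.1], hc.2.le⟩ hc.1.le
  rw [rpow_sub_one hK.ne', div_le_iff₀ hK]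
  linarith [hL.deriv_half_le hp]

theorem apply_half_le_two (hp : 3 ≤ p) : v (1 / 2) ≤ 2 := by
  by_contra! hK
  have h4 : (2 : ℝ) ^ (2 : ℝ) ≤ 2 ^ (p - 1) :=
    rpow_le_rpow_of_exponent_le one_le_two (by linarith)
  rw [rpow_two] at h4
  linarith [rpow_lt_rpow zero_le_two hK (by linarith : 0 < p - 1),
    hL.rpow_sub_one_apply_half_le_four (by linarith)]

theorem rpow_apply_zero_le (hp : 3 ≤ p) : v 0 ^ (p + 1) ≤ 8 * (p + 3) := by
  have hK : 0 < v (1 / 2) := hL.pos ⟨by norm_num, by norm_num⟩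
  obtain ⟨c, hc, hderiv_c⟩ := hL.exists_deriv_eq_neg_two_mul
  have hc' : c ∈ Icc (-1 : ℝ) 1 := ⟨by linarith [hc.1], hc.2.le⟩
  have henergy := hL.add_one_mul_deriv_sq_eq (by linarith) hc'
  have hvc : v c ^ (p + 1) ≤ v (1 / 2) ^ (p + 1) :=
    rpow_le_rpow (hL.nonneg hc') (hL.antitoneOn ⟨by norm_num, by norm_num⟩
      ⟨by linarith [hc.1], hc.2.le⟩ hc.1.le) (by linarith)
  have hK_rpow : v (1 / 2) ^ (p + 1) ≤ 16 := by
    rw [rpow_add_one_eq_rpow_sub_one_mul_sq hK]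
    nlinarith [hL.rpow_sub_one_apply_half_le_four (by linarith), hL.apply_half_le_two hp,
      rpow_nonneg hK.le (p - 1)]
  have hK_sq : v (1 / 2) ^ 2 ≤ 4 := by nlinarith [hL.apply_half_le_two hp]
  rw [hderiv_c] at henergy
  nlinarith [mul_le_mul_of_nonneg_left hK_sq (by linarith : (0 : ℝ) ≤ p + 1)]

end IsLaneEmden

/-- Energy identity and uniform two-sided bounds on the energy as `p → +∞`. -/
theorem energy_identity_and_bounds
    (u : ℝ → ℝ → ℝ) (hu : ∀ p : ℝ, 1 < p → IsLaneEmden p (u p)) :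
    (∀ p : ℝ, 1 < p →
      (∫ t in (-1 : ℝ)..1, (deriv (u p) t) ^ 2) = ∫ t in (-1 : ℝ)..1, u p t ^ (p + 1)) ∧
    ∃ c > (0 : ℝ), ∃ C > (0 : ℝ), ∃ p₀ > (1 : ℝ), ∀ p ≥ p₀,
      c ≤ (∫ t in (-1 : ℝ)..1, u p t ^ (p + 1)) ∧
      (∫ t in (-1 : ℝ)..1, u p t ^ (p + 1)) ≤ C := by
  refine ⟨fun p hp => (hu p hp).integral_deriv_sq_eq, 1, one_pos, 32, by norm_num, 3, by norm_num,
    fun p hp => ?_⟩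
  have hL := hu p (by linarith)
  have henergy := hL.add_three_mul_integral_rpow_eq (by linarith)
  have hlower := hL.add_three_le_four_mul_rpow (by linarith)
  have hupper := hL.rpow_apply_zero_le hp
  constructor <;> nlinarith
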